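/- arXiv:1612.05320 — 2 statements merged into one kernel-verified Lean document; each statement's English description precedes it below -/
import Mathlib

section
/- For every odd integer ℓ ≥ 7, there exists a palindrome of length ℓ over the binary alphabet {0,1} whose critical exponent is exactly 7/3: it contains a factor of length p with period q satisfying p/q ≥ 7/3, but contains no factor of length p with period q satisfying p/q > 7/3. -/
/-- A word `x` has period `q` (with `1 ≤ q ≤ |x|`) if `x[i] = x[i+q]`
whenever both indices are in range. -/
def HasPeriod {A : Type*} (x : List A) (q : ℕ) : Prop :=
  1 ≤ q ∧ q ≤ x.length ∧ ∀ i : ℕ, i + q < x.length → x[i]? = x[i + q]?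

/-- `w` contains an `e`-power: a nonempty factor of length `p` with period `q`
and `p/q ≥ e`. -/
def ContainsPowGe {A : Type*} (w : List A) (e : ℚ) : Prop :=
  ∃ x : List A, ∃ q : ℕ, x ≠ [] ∧ x <:+: w ∧ HasPeriod x q ∧
    e ≤ (x.length : ℚ) / (q : ℚ)

/-- `w` contains an `e⁺`-power: a nonempty factor of length `p` with period `q`
and `p/q > e`. -/
def ContainsPowGt {A : Type*} (w : List A) (e : ℚ) : Prop :=
  ∃ x : List A, ∃ q : ℕ, x ≠ [] ∧ x <:+: w ∧ HasPeriod x q ∧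
    e < (x.length : ℚ) / (q : ℚ)

/-- The critical exponent of `w` is exactly `e`: some nonempty factor has
exponent at least `e`, and no nonempty factor has exponent exceeding `e`. -/
def CritExpIs {A : Type*} (w : List A) (e : ℚ) : Prop :=
  ContainsPowGe w e ∧ ¬ ContainsPowGt w e

/-!
The witness of length `2m + 7` is `ū · 0110110 · u`, where `u` is the factor of length `m` of the
Thue–Morse word `t` starting at position 3 and `ū` is its reversal; the central block `0110110`
has exponent `7/3`.

A factor of exponent `> 7/3` and period `q` has length at least `2q + 1`. By mirror symmetry it
reaches at least as far to the right of the central block as to the left. If it overhangs the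
central block to the right by `2q + 1` letters, that overhang is an overlap in `t`, which is
overlap-free (Thue). Otherwise, if `q ≥ 21`, the exponent bound forces the factor to contain the
central block and its translate by `q`, which lies in `t`; so `0110110` would be a factor of `t`,
again an overlap. The remaining factors have `q ≤ 20`, so they lie within 40 letters of the
central block, where the word does not depend on `m`; they are excluded by evaluation.
-/

def thueMorse (n : ℕ) : Bool := (Nat.digits 2 n).sum % 2 == 1

theorem thueMorse_two_mul (n : ℕ) : thueMorse (2 * n) = thueMorse n := by
  rcases n.eq_zero_or_pos with rfl | hn
  · rfl
  · simp [thueMorse, Nat.digits_def' one_lt_two (by omega : 0 < 2 * n)]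

theorem thueMorse_two_mul_add_one (n : ℕ) : thueMorse (2 * n + 1) = !thueMorse n := by
  rw [thueMorse, thueMorse, Nat.digits_def' one_lt_two (by omega),
    show (2 * n + 1) % 2 = 1 by omega, show (2 * n + 1) / 2 = n by omega, List.sum_cons,
    Bool.eq_iff_iff]
  simp only [beq_iff_eq, Bool.not_eq_true', beq_eq_false_iff_ne]
  omega

theorem thueMorse_two_mul_ne (n : ℕ) : thueMorse (2 * n) ≠ thueMorse (2 * n + 1) := by
  simp [thueMorse_two_mul, thueMorse_two_mul_add_one]

theorem thueMorse_two_mul_add_eq_iff {a b c : ℕ} (hc : c < 2) :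
    thueMorse (2 * a + c) = thueMorse (2 * b + c) ↔ thueMorse a = thueMorse b := by
  interval_cases c <;> simp [thueMorse_two_mul, thueMorse_two_mul_add_one]

section PeriodicOn

variable {α β : Type*}

/-- The factor `f s ⋯ f (s + p - 1)` of the infinite word `f` has period `q`. -/
def PeriodicOn (f : ℕ → α) (s p q : ℕ) : Prop :=
  ∀ i < p - q, f (s + i) = f (s + i + q)

instance [DecidableEq α] (f : ℕ → α) (s p q : ℕ) : Decidable (PeriodicOn f s p q) :=
  inferInstanceAs (Decidable (∀ i < p - q, _))

namespace PeriodicOn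

variable {f g : ℕ → α} {s p q : ℕ}

theorem mono (h : PeriodicOn f s p q) {s' p' : ℕ} (hs : s ≤ s') (hp : s' + p' ≤ s + p) :
    PeriodicOn f s' p' q := by
  intro i hi
  have := h (s' - s + i) (by omega)
  rwa [show s + (s' - s + i) = s' + i by omega] at this

theorem transfer (h : PeriodicOn f s p q) {s' : ℕ} (e : ∀ i < p, g (s' + i) = f (s + i)) :
    PeriodicOn g s' p q := by
  intro i hi
  rw [e i (by omega), add_assoc, e (i + q) (by omega), ← add_assoc]
  exact h i hi

theorem reflect (h : PeriodicOn f s p q) {s' : ℕ}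
    (e : ∀ i < p, g (s' + i) = f (s + (p - 1 - i))) : PeriodicOn g s' p q := by
  intro i hi
  rw [e i (by omega), add_assoc, e (i + q) (by omega),
    show s + (p - 1 - i) = s + (p - 1 - i - q) + q by omega,
    show s + (p - 1 - (i + q)) = s + (p - 1 - i - q) by omega]
  exact (h _ (by omega)).symm

theorem comp (k : α → β) (h : PeriodicOn f s p q) : PeriodicOn (k ∘ f) s p q :=
  fun i hi => congrArg k (h i hi)

theorem of_comp {k : α → β} (hk : Function.Injective k) (h : PeriodicOn (k ∘ f) s p q) :
    PeriodicOn f s p q :=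
  fun i hi => hk (h i hi)

end PeriodicOn

theorem containsPowGe_map_range {f : ℕ → α} {n s p q : ℕ} {e : ℚ} (h : PeriodicOn f s p q)
    (hq : 0 < q) (hqp : q ≤ p) (hn : s + p ≤ n) (he : e ≤ p / q) :
    ContainsPowGe ((List.range n).map f) e := by
  refine ⟨(List.range' s p).map f, q, ?_, ?_, ⟨hq, by simpa, fun i hi => ?_⟩,
    by simpa using he⟩
  · simp only [ne_eq, List.map_eq_nil_iff, List.range'_eq_nil_iff]
    omega
  · refine List.infix_iff_getElem?.mpr ⟨s, by simpa [add_comm] using hn, fun i hi => ?_⟩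
    simp only [List.length_map, List.length_range'] at hi
    simp [add_comm i s, List.getElem?_range (by omega : s + i < n)]
  · simp only [List.length_map, List.length_range'] at hi
    simpa [List.getElem?_range' (by omega : i < p), List.getElem?_range' (by omega : i + q < p),
      add_assoc] using h i (by omega)

theorem not_containsPowGt_map_range {f : ℕ → α} {n : ℕ} {e : ℚ}
    (h : ∀ s p q : ℕ, 0 < q → e < (p : ℚ) / q → s + p ≤ n → ¬ PeriodicOn f s p q) :
    ¬ ContainsPowGt ((List.range n).map f) e := by
  rintro ⟨x, q, -, hx, ⟨hq, -, hper⟩, he⟩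
  obtain ⟨k, hk, hget⟩ := List.infix_iff_getElem?.mp hx
  simp only [List.length_map, List.length_range] at hk
  refine h k x.length q hq he (by omega) fun i hi => ?_
  have h₁ := hget i (by omega)
  have h₂ := hget (i + q) (by omega)
  simp only [List.getElem?_map, List.getElem?_range (by omega : i + k < n),
    List.getElem?_range (by omega : i + q + k < n), Option.map_some, Option.some.injEq] at h₁ h₂
  rw [add_comm k i, add_right_comm, h₁, h₂, ← Option.some_inj, ← List.getElem?_eq_getElem,
    ← List.getElem?_eq_getElem]
  exact hper i (by omega)

end PeriodicOn

theorem thueMorse_not_periodicOn_three_one (n : ℕ) : ¬ PeriodicOn thueMorse n 3 1 := by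
  intro h
  obtain ⟨a, rfl | rfl⟩ := Nat.even_or_odd' n
  · exact thueMorse_two_mul_ne a (h 0 (by norm_num))
  · exact thueMorse_two_mul_ne (a + 1) (h 1 (by norm_num))

theorem PeriodicOn.thueMorse_halve {s r : ℕ}
    (h : PeriodicOn thueMorse s (2 * (2 * r) + 1) (2 * r)) :
    PeriodicOn thueMorse (s / 2) (2 * r + 1) r := by
  intro j hj
  have := h (2 * j) (by omega)
  rwa [show s + 2 * j = 2 * (s / 2 + j) + s % 2 by omega,
    show 2 * (s / 2 + j) + s % 2 + 2 * r = 2 * (s / 2 + j + r) + s % 2 by omega,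
    thueMorse_two_mul_add_eq_iff (Nat.mod_lt _ two_pos)] at this

theorem PeriodicOn.exists_thueMorse_periodicOn_three_one {s r : ℕ} (hr : 0 < r)
    (h : PeriodicOn thueMorse s (2 * (2 * r + 1) + 1) (2 * r + 1)) :
    ∃ n, PeriodicOn thueMorse n 3 1 := by
  obtain ⟨a, rfl | rfl⟩ := Nat.even_or_odd' s
  · refine ⟨a + r, fun i hi => ?_⟩
    have h₀ := h (2 * i) (by omega)
    have h₁ := h (2 * i + 1) (by omega)
    rw [show 2 * a + 2 * i = 2 * (a + i) by ring,
      show 2 * (a + i) + (2 * r + 1) = 2 * (a + i + r) + 1 by ring,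
      thueMorse_two_mul, thueMorse_two_mul_add_one] at h₀
    rw [show 2 * a + (2 * i + 1) = 2 * (a + i) + 1 by ring,
      show 2 * (a + i) + 1 + (2 * r + 1) = 2 * (a + i + r + 1) by ring,
      thueMorse_two_mul, thueMorse_two_mul_add_one] at h₁
    rw [show a + r + i = a + i + r by ring, ← h₁, h₀, Bool.not_not]
  · refine ⟨a, fun i hi => ?_⟩
    have h₀ := h (2 * i) (by omega)
    have h₁ := h (2 * i + 1) (by omega)
    rw [show 2 * a + 1 + 2 * i = 2 * (a + i) + 1 by ring,
      show 2 * (a + i) + 1 + (2 * r + 1) = 2 * (a + i + r + 1) by ring,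
      thueMorse_two_mul, thueMorse_two_mul_add_one] at h₀
    rw [show 2 * a + 1 + (2 * i + 1) = 2 * (a + i + 1) by ring,
      show 2 * (a + i + 1) + (2 * r + 1) = 2 * (a + i + r + 1) + 1 by ring,
      thueMorse_two_mul, thueMorse_two_mul_add_one] at h₁
    rw [h₁, ← h₀, Bool.not_not]

theorem thueMorse_not_periodicOn {q : ℕ} (hq : 0 < q) (s : ℕ) :
    ¬ PeriodicOn thueMorse s (2 * q + 1) q := by
  induction q using Nat.strong_induction_on generalizing s with
  | _ q ih =>
  intro h
  obtain ⟨r, rfl | rfl⟩ := Nat.even_or_odd' q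
  · exact ih r (by omega) (by omega) (s / 2) h.thueMorse_halve
  · rcases r.eq_zero_or_pos with rfl | hr
    · exact thueMorse_not_periodicOn_three_one s h
    · obtain ⟨n, hn⟩ := h.exists_thueMorse_periodicOn_three_one hr
      exact thueMorse_not_periodicOn_three_one n hn

/-- Letter `i` of `ū · 0110110 · u`, where `u` is the factor of length `m` of `thueMorse`
starting at position 3. -/
def palLetter (m i : ℕ) : Bool :=
  if i < m then thueMorse (m + 2 - i)
  else if i < m + 7 then decide ((i - m) % 3 ≠ 0)
  else thueMorse (i - m - 4)

theorem palLetter_eq_of_add_eq {m M x y : ℕ} (h : x + M = y + m) :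
    palLetter m x = palLetter M y := by
  unfold palLetter
  split_ifs <;> first | omega | (congr 1; omega) | (simp only [decide_eq_decide]; omega)

theorem palLetter_of_le {m i : ℕ} (h : m + 7 ≤ i) : palLetter m i = thueMorse (i - m - 4) := by
  rw [palLetter, if_neg (by omega), if_neg (by omega)]

theorem palLetter_reflect {m i : ℕ} (h : i < 2 * m + 7) :
    palLetter m (2 * m + 6 - i) = palLetter m i := by
  unfold palLetter
  split_ifs <;> first | omega | (congr 1; omega) | (simp only [decide_eq_decide]; omega)

theorem palLetter_periodicOn_center (m : ℕ) : PeriodicOn (palLetter m) m 7 3 :=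
  (show PeriodicOn (palLetter 0) 0 7 3 by decide).transfer
    fun _ _ => palLetter_eq_of_add_eq (by omega)

theorem not_periodicOn_palLetter_forty :
    ∀ q ≤ 20, 0 < q → ∀ s ≤ 87 - (7 * q / 3 + 1),
      ¬ PeriodicOn (palLetter 40) s (7 * q / 3 + 1) q := by
  decide

section palLetter

variable {m s p q : ℕ}

theorem not_periodicOn_palLetter_of_le (hq : 0 < q) (hs : m + 7 ≤ s) :
    ¬ PeriodicOn (palLetter m) s (2 * q + 1) q := fun h =>
  thueMorse_not_periodicOn hq (s - m - 4) <| h.transfer fun i _ => by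
    rw [palLetter_of_le (by omega)]
    congr 1
    omega

theorem not_periodicOn_palLetter_of_center_le (hq : 7 ≤ q) (hs : s ≤ m)
    (hp : m + q + 7 ≤ s + p) :
    ¬ PeriodicOn (palLetter m) s p q := fun h =>
  thueMorse_not_periodicOn (q := 3) (by norm_num) (q - 4) <|
    (palLetter_periodicOn_center m).transfer fun i _ => by
      have := h (m + i - s) (by omega)
      rw [show s + (m + i - s) = m + i by omega,
        palLetter_of_le (i := m + i + q) (by omega)] at this
      rw [this]
      congr 1
      omega

theorem not_periodicOn_palLetter_of_near_center (hq : 0 < q) (hq20 : q ≤ 20)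
    (hpq : 7 * q < 3 * p) (hs : m ≤ s + 40) (hp : s + p ≤ m + 47) :
    ¬ PeriodicOn (palLetter m) s p q := fun h =>
  not_periodicOn_palLetter_forty q hq20 hq (s + 40 - m) (by omega) <|
    (h.mono le_rfl (by omega : s + (7 * q / 3 + 1) ≤ s + p)).transfer
      fun _ _ => palLetter_eq_of_add_eq (by omega)

theorem not_periodicOn_palLetter (hq : 0 < q) (hpq : 7 * q < 3 * p) (hsp : s + p ≤ 2 * m + 7) :
    ¬ PeriodicOn (palLetter m) s p q := by
  intro h
  wlog hs : 2 * m + 7 ≤ 2 * s + p generalizing s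
  · refine this (s := 2 * m + 7 - s - p) (by omega) (h.reflect fun i _ => ?_) (by omega)
    rw [← palLetter_reflect (by omega)]
    congr 1
    omega
  by_cases htail : m + 2 * q + 8 ≤ s + p
  · exact not_periodicOn_palLetter_of_le hq (by omega)
      (h.mono (s' := s + p - (2 * q + 1)) (by omega) (by omega))
  by_cases hq20 : q ≤ 20
  · exact not_periodicOn_palLetter_of_near_center hq hq20 hpq (by omega) (by omega) h
  · exact not_periodicOn_palLetter_of_center_le (by omega) (by omega) (by omega) h

end palLetter

def palWord (m : ℕ) : List (Fin 2) :=
  (List.range (2 * m + 7)).map (finTwoEquiv.symm ∘ palLetter m)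

theorem palWord_length (m : ℕ) : (palWord m).length = 2 * m + 7 := by
  simp [palWord]

theorem palWord_reverse (m : ℕ) : (palWord m).reverse = palWord m := by
  refine List.ext_getElem (by simp) fun i h₁ h₂ => ?_
  rw [palWord_length] at h₂
  simp only [palWord, List.getElem_reverse, List.getElem_map, List.getElem_range,
    List.length_map, List.length_range, Function.comp_apply]
  rw [show 2 * m + 7 - 1 - i = 2 * m + 6 - i by omega, palLetter_reflect h₂]

theorem palWord_containsPowGe (m : ℕ) : ContainsPowGe (palWord m) (7 / 3) :=
  containsPowGe_map_range ((palLetter_periodicOn_center m).comp _) (by norm_num) (by norm_num)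
    (by omega) (by norm_num)

theorem palWord_not_containsPowGt (m : ℕ) : ¬ ContainsPowGt (palWord m) (7 / 3) :=
  not_containsPowGt_map_range fun s p q hq hpq hsp h => by
    rw [div_lt_div_iff₀ (by norm_num) (by exact_mod_cast hq)] at hpq
    exact not_periodicOn_palLetter hq (by exact_mod_cast (by linarith : (7 * q : ℚ) < 3 * p)) hsp
      (h.of_comp finTwoEquiv.symm.injective)

theorem exists_odd_binary_palindrome_critexp_73 (ℓ : ℕ)
    (hodd : Odd ℓ) (hlen : 7 ≤ ℓ) :
    ∃ w : List (Fin 2), w.length = ℓ ∧ w.reverse = w ∧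
      ContainsPowGe w (7 / 3) ∧ ¬ ContainsPowGt w (7 / 3) := by
  obtain ⟨m, rfl⟩ : ∃ m, ℓ = 2 * m + 7 := by
    obtain ⟨k, rfl⟩ := hodd
    exact ⟨k - 3, by omega⟩
  exact ⟨palWord m, palWord_length m, palWord_reverse m, palWord_containsPowGe m,
    palWord_not_containsPowGt m⟩
end

section
/- Let h be the 11-uniform morphism on {0,1,2,3} defined by h(0) = 01312021310, h(1) = 12023132021, h(2) = 23130203132, h(3) = 30201310203. For every n ≥ 1, the word h^n(0) is a palindrome of length 11^n that contains no factor of length p with period q satisfying p/q > 3/2. -/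
/-- The 11-uniform palindromic morphism on {0,1,2,3}. -/
def hmor : List (Fin 4) → List (Fin 4) :=
  fun w => w.flatMap (fun a =>
    if a = 0 then [0, 1, 3, 1, 2, 0, 2, 1, 3, 1, 0]
    else if a = 1 then [1, 2, 0, 2, 3, 1, 3, 2, 0, 2, 1]
    else if a = 2 then [2, 3, 1, 3, 0, 2, 0, 3, 1, 3, 2]
    else [3, 0, 2, 0, 1, 3, 1, 0, 2, 0, 3])

/-!
A factor with period `q` and exponent `> 3/2` contains one of length exactly `⌊3q/2⌋ + 1`, and
these are ruled out in `hmor^[n] [0]` two iterations at a time. For `q ≥ 40` the first half of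
such a factor of an image `hmor v` contains a whole block `hmor [a]`; since no letter image occurs
inside the image of two letters at a nonzero offset, `11 ∣ q`, and since the images of distinct
letters differ at every position, the repetition comes from one of period `q / 11` in `v`.
A short repetition in `hmor (hmor u)` lies inside `hmor (hmor [a, b])` for a factor `ab` of `u`,
where `a ≠ b` (the square `aa` has exponent 2), and these twelve words are checked by computation.
-/

section PowGtThreeHalves

variable {α : Type*}

/-- The factor of `w` of length `⌊3q/2⌋ + 1` at position `i` has period `q`: the shortest factor
with period `q` and exponent `> 3/2`. -/
def PowGtThreeHalvesAt (w : List α) (i q : ℕ) : Prop :=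
  1 ≤ q ∧ i + 3 * q / 2 + 1 ≤ w.length ∧ ∀ j ≤ q / 2, w[i + j]? = w[i + j + q]?

def AvoidsPowGtThreeHalves (w : List α) : Prop :=
  ∀ i q, ¬ PowGtThreeHalvesAt w i q

theorem ContainsPowGt.exists_powGtThreeHalvesAt {w : List α} (h : ContainsPowGt w (3 / 2)) :
    ∃ i q, PowGtThreeHalvesAt w i q := by
  obtain ⟨x, q, -, ⟨s, t, rfl⟩, ⟨hq, -, hper⟩, hexp⟩ := h
  have hq' : (0 : ℚ) < q := by exact_mod_cast hq
  rw [div_lt_div_iff₀ two_pos hq'] at hexp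
  have hlen : 3 * q < x.length * 2 := by exact_mod_cast hexp
  have hx : ∀ m < x.length, (s ++ x ++ t)[s.length + m]? = x[m]? := fun m hm => by
    rw [List.append_assoc, List.getElem?_append_right (by omega), Nat.add_sub_cancel_left,
      List.getElem?_append_left hm]
  refine ⟨s.length, q, hq, by simp; omega, fun j hj => ?_⟩
  rw [hx j (by omega), Nat.add_assoc, hx (j + q) (by omega)]
  exact hper j (by omega)

theorem PowGtThreeHalvesAt.le_length {w : List α} {i q : ℕ} (h : PowGtThreeHalvesAt w i q) :
    q ≤ w.length := by
  have := h.2.1; omega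

theorem PowGtThreeHalvesAt.append_right {w : List α} {i q : ℕ} (h : PowGtThreeHalvesAt w i q)
    (t : List α) : PowGtThreeHalvesAt (w ++ t) i q := by
  obtain ⟨hq, hlen, heq⟩ := h
  refine ⟨hq, by simp; omega, fun j hj => ?_⟩
  rw [List.getElem?_append_left (by omega), List.getElem?_append_left (by omega)]
  exact heq j hj

theorem PowGtThreeHalvesAt.of_append_right {w t : List α} {i q : ℕ}
    (h : PowGtThreeHalvesAt (w ++ t) i q) (hw : i + 3 * q / 2 + 1 ≤ w.length) :
    PowGtThreeHalvesAt w i q := by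
  obtain ⟨hq, -, heq⟩ := h
  refine ⟨hq, hw, fun j hj => ?_⟩
  have := heq j hj
  rwa [List.getElem?_append_left (by omega), List.getElem?_append_left (by omega)] at this

theorem PowGtThreeHalvesAt.drop {w : List α} {i q : ℕ} (h : PowGtThreeHalvesAt w i q) {n : ℕ}
    (hn : n ≤ i) : PowGtThreeHalvesAt (w.drop n) (i - n) q := by
  obtain ⟨hq, hlen, heq⟩ := h
  refine ⟨hq, by simp; omega, fun j hj => ?_⟩
  rw [List.getElem?_drop, List.getElem?_drop, show n + (i - n + j) = i + j by omega,
    show n + (i - n + j + q) = i + j + q by omega]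
  exact heq j hj

end PowGtThreeHalves

section ShortPeriods

def longestTrueRun (l : List Bool) : ℕ :=
  go l 0 0
where
  go : List Bool → ℕ → ℕ → ℕ
    | [], _, best => best
    | true :: l, cur, best => go l (cur + 1) (max best (cur + 1))
    | false :: l, _, best => go l 0 best

theorem longestTrueRun.le_go (l : List Bool) (cur best : ℕ) :
    best ≤ longestTrueRun.go l cur best := by
  induction l generalizing cur best with
  | nil => rfl
  | cons b l ih =>
    cases b
    · exact ih 0 best
    · exact (le_max_left _ _).trans (ih _ _)

theorem longestTrueRun.add_le_go_replicate_append (n : ℕ) (l : List Bool) {cur best : ℕ}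
    (h : cur ≤ best) : cur + n ≤ longestTrueRun.go (List.replicate n true ++ l) cur best := by
  induction n generalizing cur best with
  | zero => exact h.trans (le_go l cur best)
  | succ n ih =>
    have := ih (cur := cur + 1) (le_max_right best (cur + 1))
    simp only [List.replicate_succ, List.cons_append, go]
    omega

theorem le_longestTrueRun_of_infix {n : ℕ} {l : List Bool} (h : List.replicate n true <:+: l) :
    n ≤ longestTrueRun l := by
  obtain ⟨s, t, rfl⟩ := h
  suffices ∀ cur best, cur ≤ best →
      n ≤ longestTrueRun.go (s ++ List.replicate n true ++ t) cur best from this 0 0 le_rfl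
  induction s with
  | nil =>
    intro cur best h
    exact (Nat.le_add_left n cur).trans (longestTrueRun.add_le_go_replicate_append n t h)
  | cons b s ih =>
    intro cur best h
    cases b
    · exact ih 0 best (Nat.zero_le _)
    · exact ih _ _ (le_max_right _ _)

variable {α : Type*} [DecidableEq α]

def agreements (w : List α) (q : ℕ) : List Bool :=
  List.zipWith (fun a b => decide (a = b)) w (w.drop q)

theorem PowGtThreeHalvesAt.replicate_infix_agreements {w : List α} {i q : ℕ}
    (h : PowGtThreeHalvesAt w i q) : List.replicate (q / 2 + 1) true <:+: agreements w q := by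
  obtain ⟨-, hlen, heq⟩ := h
  refine List.infix_iff_getElem?.2 ⟨i, by simp [agreements]; omega, fun j hj => ?_⟩
  simp only [List.length_replicate] at hj
  have h1 : w[j + i]? = some w[j + i] := List.getElem?_eq_getElem (by omega)
  have h2 : w[j + i + q]? = some w[j + i + q] := List.getElem?_eq_getElem (by omega)
  have := heq j (by omega)
  rw [Nat.add_comm i j, h1, h2] at this
  simp [agreements, List.getElem?_zipWith, List.getElem?_drop, Nat.add_comm q, h1, h2,
    Option.some.inj this]

-- A factor of period `q` and exponent `> 3/2` is a run of `q / 2 + 1` agreements at shift `q`.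
def shortPeriodsFree (w : List α) (Q : ℕ) : Bool :=
  (List.range' 1 Q).all fun q => longestTrueRun (agreements w q) ≤ q / 2

theorem not_powGtThreeHalvesAt_of_shortPeriodsFree {w : List α} {Q : ℕ}
    (hw : shortPeriodsFree w Q = true) {i q : ℕ} (hq : q ≤ Q) :
    ¬ PowGtThreeHalvesAt w i q := by
  intro h
  have := (List.all_eq_true.1 hw) q (List.mem_range'_1.2 ⟨h.1, by omega⟩)
  have := le_longestTrueRun_of_infix h.replicate_infix_agreements
  simp_all only [decide_eq_true_eq]
  omega

theorem avoidsPowGtThreeHalves_of_shortPeriodsFree {w : List α}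
    (hw : shortPeriodsFree w w.length = true) : AvoidsPowGtThreeHalves w :=
  fun _ _ h => not_powGtThreeHalvesAt_of_shortPeriodsFree hw h.le_length h

end ShortPeriods

section UniformMorphism

variable {α β : Type*} {f : α → List β} {k : ℕ}

theorem List.length_flatMap_of_length_eq (hf : ∀ a, (f a).length = k) (w : List α) :
    (w.flatMap f).length = k * w.length := by
  induction w with
  | nil => simp
  | cons a w ih =>
    rw [List.flatMap_cons, List.length_append, hf, ih, List.length_cons, Nat.mul_succ, Nat.add_comm]

theorem List.drop_mul_flatMap (hf : ∀ a, (f a).length = k) (w : List α) (l : ℕ) :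
    (w.flatMap f).drop (k * l) = (w.drop l).flatMap f := by
  induction l generalizing w with
  | zero => simp
  | succ l ih =>
    cases w with
    | nil => simp
    | cons a w =>
      rw [List.flatMap_cons, Nat.mul_succ, Nat.add_comm, ← List.drop_drop, List.drop_left' (hf a),
        ih, List.drop_succ_cons]

theorem List.getElem?_flatMap_mul_add (hf : ∀ a, (f a).length = k) (w : List α) (l : ℕ)
    {r : ℕ} (hr : r < k) : (w.flatMap f)[k * l + r]? = w[l]?.bind fun a => (f a)[r]? := by
  rw [← List.getElem?_drop, List.drop_mul_flatMap hf, ← Nat.add_zero l, ← List.getElem?_drop]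
  cases w.drop l with
  | nil => rfl
  | cons a v => simp [List.getElem?_append_left, hf a, hr]

theorem PowGtThreeHalvesAt.dvd_of_flatMap (hf : ∀ a, (f a).length = k)
    (hsync : ∀ a b c, ∀ m < k, 0 < m → ¬ f a <+: (f b ++ f c).drop m)
    {w : List α} {i q : ℕ} (h : PowGtThreeHalvesAt (w.flatMap f) i q) (hq : 4 * k ≤ q + 4) :
    k ∣ q := by
  obtain ⟨-, hlen, heq⟩ := h
  rw [List.length_flatMap_of_length_eq hf] at hlen
  obtain rfl | hk := Nat.eq_zero_or_pos k
  · simp at hlen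
  -- the first block `f w[b]` starting inside the window lies in its first half, so it
  -- reappears `q` letters later, at offset `q % k` in `f w[l] ++ f w[l + 1]`
  have hb := Nat.div_add_mod (i + k - 1) k
  have := Nat.mod_lt (i + k - 1) hk
  set b := (i + k - 1) / k
  have hqk := Nat.div_add_mod q k
  have := Nat.mod_lt q hk
  rw [Nat.dvd_iff_mod_eq_zero]
  by_contra hm
  set l := b + q / k
  have hl : k * l + q % k = k * b + q := by rw [Nat.mul_add]; omega
  have hlw : l + 1 < w.length :=
    Nat.lt_of_mul_lt_mul_left (a := k) (by rw [Nat.mul_add]; omega)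
  have hbw : b < w.length := (Nat.le_add_right b (q / k)).trans_lt (by omega)
  refine hsync w[b] w[l] w[l + 1] (q % k) (Nat.mod_lt q hk) (by omega) ?_
  refine List.prefix_iff_getElem?.2 fun t ht => ?_
  rw [hf] at ht
  have e := heq (k * b + t - i) (by omega)
  rw [show i + (k * b + t - i) = k * b + t by omega,
    show k * b + t + q = k * l + (q % k + t) by omega, List.getElem?_flatMap_mul_add hf w b ht,
    List.getElem?_eq_getElem hbw, Option.bind_some, List.getElem?_eq_getElem (by rw [hf]; exact ht)]
    at e
  rw [List.getElem?_drop, e]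
  by_cases hmt : q % k + t < k
  · rw [List.getElem?_flatMap_mul_add hf w l hmt, List.getElem?_eq_getElem (by omega : l < _),
      List.getElem?_append_left (by rw [hf]; exact hmt), Option.bind_some]
  · rw [show k * l + (q % k + t) = k * (l + 1) + (q % k + t - k) by rw [Nat.mul_succ]; omega,
      List.getElem?_flatMap_mul_add hf w (l + 1) (by omega), List.getElem?_eq_getElem hlw,
      List.getElem?_append_right (by rw [hf]; omega), hf, Option.bind_some]

theorem PowGtThreeHalvesAt.of_flatMap (hf : ∀ a, (f a).length = k)
    (hcol : ∀ a b, ∀ r < k, (f a)[r]? = (f b)[r]? → a = b)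
    {w : List α} {i q : ℕ} (h : PowGtThreeHalvesAt (w.flatMap f) i (k * q)) :
    PowGtThreeHalvesAt w (i / k) q := by
  obtain ⟨hq, hlen, heq⟩ := h
  rw [List.length_flatMap_of_length_eq hf] at hlen
  obtain rfl | hk := Nat.eq_zero_or_pos k
  · simp at hq
  have hi := Nat.div_add_mod i k
  have := Nat.mod_lt i hk
  have h3 : k * (3 * q / 2) ≤ 3 * (k * q) / 2 :=
    (Nat.mul_div_le_mul_div_assoc _ _ _).trans_eq (by ring_nf)
  have h1 : k * (q / 2) ≤ k * q / 2 := Nat.mul_div_le_mul_div_assoc _ _ _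
  refine ⟨Nat.pos_of_mul_pos_left hq, ?_, fun j hj => ?_⟩
  · have : i / k + 3 * q / 2 < w.length :=
      Nat.lt_of_mul_lt_mul_left (a := k) (by rw [Nat.mul_add]; omega)
    omega
  -- block `c` meets the first half of the window at its offset `r`
  set c := i / k + j
  have hc : k * c = k * (i / k) + k * j := Nat.mul_add _ _ _
  have hj' : k * j ≤ k * (q / 2) := Nat.mul_le_mul_left k hj
  set r := max i (k * c) - k * c
  have hr : r < k := by omega
  have hcw : c + q < w.length := by
    have : k * (c + q) < k * w.length := by rw [Nat.mul_add]; omega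
    exact Nat.lt_of_mul_lt_mul_left this
  have hcw' : c < w.length := by omega
  have e := heq (max i (k * c) - i) (by omega)
  rw [show i + (max i (k * c) - i) = k * c + r by omega,
    show k * c + r + k * q = k * (c + q) + r by rw [Nat.mul_add k c q]; omega,
    List.getElem?_flatMap_mul_add hf w c hr, List.getElem?_flatMap_mul_add hf w (c + q) hr,
    List.getElem?_eq_getElem hcw', List.getElem?_eq_getElem hcw] at e
  rw [List.getElem?_eq_getElem hcw', List.getElem?_eq_getElem hcw,
    hcol w[c] w[c + q] r hr (by simpa using e)]

end UniformMorphism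

section Hmor

theorem hmor_eq_flatMap (w : List (Fin 4)) : hmor w = w.flatMap fun a => hmor [a] := by
  simp [hmor]

theorem length_hmor_singleton (a : Fin 4) : (hmor [a]).length = 11 := by
  revert a; decide

theorem reverse_hmor_singleton (a : Fin 4) : (hmor [a]).reverse = hmor [a] := by
  revert a; decide

theorem hmor_singleton_not_prefix :
    ∀ a b c : Fin 4, ∀ m < 11, 0 < m → ¬ hmor [a] <+: (hmor [b] ++ hmor [c]).drop m := by
  decide

theorem hmor_singleton_inj_of_getElem?_eq :
    ∀ a b : Fin 4, ∀ r < 11, (hmor [a])[r]? = (hmor [b])[r]? → a = b := by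
  decide

theorem length_hmor (w : List (Fin 4)) : (hmor w).length = 11 * w.length := by
  rw [hmor_eq_flatMap, List.length_flatMap_of_length_eq length_hmor_singleton]

theorem reverse_hmor (w : List (Fin 4)) : (hmor w).reverse = hmor w.reverse := by
  rw [hmor_eq_flatMap, List.reverse_flatMap, hmor_eq_flatMap]
  congr 1
  funext a
  exact reverse_hmor_singleton a

theorem hmor_hmor_eq_flatMap (w : List (Fin 4)) :
    hmor (hmor w) = w.flatMap fun a => hmor (hmor [a]) := by
  rw [hmor_eq_flatMap w, hmor_eq_flatMap, List.flatMap_assoc]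
  simp only [← hmor_eq_flatMap]

theorem AvoidsPowGtThreeHalves.getElem?_ne_succ {α : Type*} {w : List α}
    (hw : AvoidsPowGtThreeHalves w) {k : ℕ} (hk : k + 1 < w.length) : w[k]? ≠ w[k + 1]? :=
  fun e => hw k 1 ⟨le_rfl, by omega, fun j hj => by rwa [Nat.le_zero.1 hj]⟩

theorem not_powGtThreeHalvesAt_hmor {v : List (Fin 4)} (hv : AvoidsPowGtThreeHalves v) {i q : ℕ}
    (hq : 40 ≤ q) : ¬ PowGtThreeHalvesAt (hmor v) i q := by
  rw [hmor_eq_flatMap]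
  intro h
  obtain ⟨q, rfl⟩ := h.dvd_of_flatMap length_hmor_singleton hmor_singleton_not_prefix (by omega)
  exact hv _ _ (h.of_flatMap length_hmor_singleton hmor_singleton_inj_of_getElem?_eq)

theorem shortPeriodsFree_hmor_hmor_pair :
    ∀ a b : Fin 4, a ≠ b → shortPeriodsFree (hmor (hmor [a, b])) 39 = true := by
  decide +kernel

theorem not_powGtThreeHalvesAt_hmor_hmor {u : List (Fin 4)} (hu : AvoidsPowGtThreeHalves u)
    {i q : ℕ} (hq : q < 40) : ¬ PowGtThreeHalvesAt (hmor (hmor u)) i q := by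
  set g : Fin 4 → List (Fin 4) := fun a => hmor (hmor [a])
  have hg : ∀ a, (g a).length = 121 := fun a => by simp [g, length_hmor]
  have hpair : ∀ a c, hmor (hmor [a, c]) = g a ++ g c := fun a c => by
    rw [hmor_hmor_eq_flatMap]
    simp only [List.flatMap_cons, List.flatMap_nil, List.append_nil, g]
  rw [hmor_hmor_eq_flatMap]
  intro h
  have hlen := h.2.1
  rw [List.length_flatMap_of_length_eq hg] at hlen
  have hb : i / 121 < u.length := by omega
  have h' := h.drop (n := 121 * (i / 121)) (by omega)
  rw [List.drop_mul_flatMap hg, List.drop_eq_getElem_cons hb, List.flatMap_cons] at h'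
  suffices ∃ c, u[i / 121] ≠ c ∧
      PowGtThreeHalvesAt (hmor (hmor [u[i / 121], c])) (i - 121 * (i / 121)) q by
    obtain ⟨c, hc, hc'⟩ := this
    exact not_powGtThreeHalvesAt_of_shortPeriodsFree (shortPeriodsFree_hmor_hmor_pair _ c hc)
      (by omega) hc'
  cases hrest : u.drop (i / 121 + 1) with
  | nil =>
    rw [hrest, List.flatMap_nil, List.append_nil] at h'
    refine ⟨u[i / 121] + 1, by simp, ?_⟩
    rw [hpair]
    exact h'.append_right _
  | cons c rest =>
    rw [hrest, List.flatMap_cons, ← List.append_assoc] at h'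
    have hc : u[i / 121 + 1]? = some c := by
      rw [← Nat.add_zero (i / 121 + 1), ← List.getElem?_drop, hrest]; rfl
    refine ⟨c, fun e => hu.getElem?_ne_succ (List.getElem?_eq_some_iff.1 hc).1 ?_, ?_⟩
    · rw [hc, List.getElem?_eq_getElem hb, e]
    · rw [hpair]
      exact h'.of_append_right (by simp [hg]; omega)

theorem avoidsPowGtThreeHalves_hmor_hmor {u : List (Fin 4)} (hu : AvoidsPowGtThreeHalves u)
    (hv : AvoidsPowGtThreeHalves (hmor u)) : AvoidsPowGtThreeHalves (hmor (hmor u)) := fun i q =>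
  if hq : q < 40 then not_powGtThreeHalvesAt_hmor_hmor hu hq
  else not_powGtThreeHalvesAt_hmor hv (by omega)

theorem avoidsPowGtThreeHalves_hmor_iterate {w : List (Fin 4)} (h₀ : AvoidsPowGtThreeHalves w)
    (h₁ : AvoidsPowGtThreeHalves (hmor w)) (n : ℕ) : AvoidsPowGtThreeHalves (hmor^[n] w) := by
  induction n using Nat.twoStepInduction with
  | zero => exact h₀
  | one => exact h₁
  | more n ih₀ ih₁ =>
    rw [Function.iterate_succ_apply'] at ih₁
    rw [Function.iterate_succ_apply', Function.iterate_succ_apply']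
    exact avoidsPowGtThreeHalves_hmor_hmor ih₀ ih₁

theorem length_hmor_iterate (w : List (Fin 4)) (n : ℕ) :
    (hmor^[n] w).length = 11 ^ n * w.length := by
  induction n with
  | zero => simp
  | succ n ih => rw [Function.iterate_succ_apply', length_hmor, ih, pow_succ, Nat.mul_assoc,
      Nat.mul_left_comm]

theorem reverse_hmor_iterate (w : List (Fin 4)) (n : ℕ) :
    (hmor^[n] w).reverse = hmor^[n] w.reverse := by
  induction n with
  | zero => rfl
  | succ n ih => rw [Function.iterate_succ_apply', reverse_hmor, ih, Function.iterate_succ_apply']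

end Hmor

theorem hmor_iterate_palindrome_avoids_general (n : ℕ) :
    ((hmor^[n]) [0]).reverse = (hmor^[n]) [0] ∧
    ((hmor^[n]) [0]).length = 11 ^ n ∧
    ¬ ContainsPowGt ((hmor^[n]) [0]) (3 / 2) := by
  refine ⟨reverse_hmor_iterate [0] n, by simp [length_hmor_iterate], fun h => ?_⟩
  have h₀ : AvoidsPowGtThreeHalves [(0 : Fin 4)] :=
    avoidsPowGtThreeHalves_of_shortPeriodsFree (by decide)
  have h₁ : AvoidsPowGtThreeHalves (hmor [0]) :=
    avoidsPowGtThreeHalves_of_shortPeriodsFree (by decide +kernel)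
  obtain ⟨i, q, h⟩ := h.exists_powGtThreeHalvesAt
  exact avoidsPowGtThreeHalves_hmor_iterate h₀ h₁ n i q h

theorem hmor_iterate_palindrome_avoids (n : ℕ) (hn : 1 ≤ n) :
    ((hmor^[n]) [0]).reverse = (hmor^[n]) [0] ∧
    ((hmor^[n]) [0]).length = 11 ^ n ∧
    ¬ ContainsPowGt ((hmor^[n]) [0]) (3 / 2) :=
  hmor_iterate_palindrome_avoids_general n
end
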